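/- In the second Heisenberg group ℍ², for the bubble set given as the graph t = φ(r) with φ(r) = (L²π/8) − (L²/4) arctan(r/√(L²−r²)) + (r/4)√(L²−r²) for 0 ≤ r < L, the horizontal gradient norm of the defining function satisfies W := √(Σ_j ((X_jφ)² + (Y_jφ)²)) = Lr / (2√(L²−r²)), where r² = Σ_{j=1}^2 (x_j² + y_j²) and X_j = ∂_{x_j} − (y_j/2)∂_t, Y_j = ∂_{y_j} + (x_j/2)∂_t. -/

import Mathlib

/-!
By the chain rule, `X_j ψ = -y_j/2 + c x_j` and `Y_j ψ = x_j/2 + c y_j` with `c = -φ'(r)/r`,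
and `φ'(r) = -r²/(2√(L²-r²))`. In the sum of squares the cross terms cancel, leaving
`(1/4 + c²) r² = L² r² / (4 (L² - r²))`.
-/

open Real

/-- The radial coordinate r on ℍ² = ℝ⁴ × ℝ (coordinates ((x_j),(y_j),t)). -/
noncomputable def heisR (p : (Fin 2 → ℝ) × (Fin 2 → ℝ) × ℝ) : ℝ :=
  Real.sqrt (∑ j : Fin 2, ((p.1 j) ^ 2 + (p.2.1 j) ^ 2))

/-- The bubble profile φ(r). -/
noncomputable def bubbleProfile (L : ℝ) (r : ℝ) : ℝ :=
  L ^ 2 * π / 8 - L ^ 2 / 4 * Real.arctan (r / Real.sqrt (L ^ 2 - r ^ 2))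
    + r / 4 * Real.sqrt (L ^ 2 - r ^ 2)

/-- The defining function ψ = t − φ(r) of the upper bubble graph. -/
noncomputable def bubbleDefFn (L : ℝ) (p : (Fin 2 → ℝ) × (Fin 2 → ℝ) × ℝ) : ℝ :=
  p.2.2 - bubbleProfile L (heisR p)

/-- The horizontal vector field X_j = ∂_{x_j} − (y_j/2)∂_t at p, as a direction. -/
noncomputable def heisXdir (j : Fin 2) (p : (Fin 2 → ℝ) × (Fin 2 → ℝ) × ℝ) :
    (Fin 2 → ℝ) × (Fin 2 → ℝ) × ℝ :=
  (Pi.single j 1, 0, -(p.2.1 j) / 2)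

/-- The horizontal vector field Y_j = ∂_{y_j} + (x_j/2)∂_t at p, as a direction. -/
noncomputable def heisYdir (j : Fin 2) (p : (Fin 2 → ℝ) × (Fin 2 → ℝ) × ℝ) :
    (Fin 2 → ℝ) × (Fin 2 → ℝ) × ℝ :=
  (0, Pi.single j 1, (p.1 j) / 2)

lemma hasDerivAt_sqrt_sub_sq {L r : ℝ} (hr : r ^ 2 < L ^ 2) :
    HasDerivAt (fun x : ℝ => √(L ^ 2 - x ^ 2)) (-r / √(L ^ 2 - r ^ 2)) r := by
  have h := ((hasDerivAt_pow 2 r).const_sub (L ^ 2)).sqrt (by linarith)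
  convert h using 1
  field_simp
  ring

lemma hasDerivAt_bubbleProfile {L r : ℝ} (hr : r ^ 2 < L ^ 2) :
    HasDerivAt (bubbleProfile L) (-r ^ 2 / (2 * √(L ^ 2 - r ^ 2))) r := by
  have hs : 0 < √(L ^ 2 - r ^ 2) := Real.sqrt_pos.mpr (by linarith)
  have hs2 : √(L ^ 2 - r ^ 2) ^ 2 = L ^ 2 - r ^ 2 := Real.sq_sqrt (by linarith)
  have hsqrt := hasDerivAt_sqrt_sub_sq hr
  have hquot := (hasDerivAt_id' r).fun_div hsqrt hs.ne'
  have hprod := (hasDerivAt_id' r |>.div_const 4).fun_mul hsqrt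
  refine (((hquot.arctan.const_mul (L ^ 2 / 4)).const_sub (L ^ 2 * π / 8)).add hprod).congr_deriv
    ?_
  field_simp
  rw [hs2]
  ring

lemma fderiv_sum_sq_apply {ι : Type*} [Fintype ι] (p v : (ι → ℝ) × (ι → ℝ) × ℝ) :
    fderiv ℝ (fun q : (ι → ℝ) × (ι → ℝ) × ℝ => ∑ j, (q.1 j ^ 2 + q.2.1 j ^ 2)) p v
      = 2 * ∑ j, (p.1 j * v.1 j + p.2.1 j * v.2.1 j) := by
  rw [fderiv_fun_sum (fun j _ => by fun_prop), Finset.mul_sum]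
  simp (disch := fun_prop) [fderiv_fun_add, fderiv_fun_pow, fderiv_apply, fderiv.fst, fderiv_snd,
    mul_add, mul_assoc]

lemma sum_sq_half_rot_add_mul {ι : Type*} [Fintype ι] (a b : ι → ℝ) (c : ℝ) :
    ∑ j, ((-b j / 2 + c * a j) ^ 2 + (a j / 2 + c * b j) ^ 2)
      = (1 / 4 + c ^ 2) * ∑ j, (a j ^ 2 + b j ^ 2) := by
  rw [Finset.mul_sum]
  congr 1 with j
  ring

section Bubble

variable {L : ℝ} {p : (Fin 2 → ℝ) × (Fin 2 → ℝ) × ℝ}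

lemma heisR_sq (p : (Fin 2 → ℝ) × (Fin 2 → ℝ) × ℝ) :
    heisR p ^ 2 = ∑ j, (p.1 j ^ 2 + p.2.1 j ^ 2) :=
  Real.sq_sqrt (by positivity)

lemma differentiableAt_heisR (hr : 0 < heisR p) : DifferentiableAt ℝ heisR p :=
  (by fun_prop : DifferentiableAt ℝ (fun q : (Fin 2 → ℝ) × (Fin 2 → ℝ) × ℝ =>
    ∑ j, (q.1 j ^ 2 + q.2.1 j ^ 2)) p).sqrt (heisR_sq p ▸ pow_ne_zero 2 hr.ne')

lemma fderiv_heisR_apply (hr : 0 < heisR p) (v : (Fin 2 → ℝ) × (Fin 2 → ℝ) × ℝ) :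
    fderiv ℝ heisR p v = (∑ j, (p.1 j * v.1 j + p.2.1 j * v.2.1 j)) / heisR p := by
  rw [show heisR = fun q => √(∑ j, (q.1 j ^ 2 + q.2.1 j ^ 2)) from rfl,
    fderiv_sqrt (f := fun q : (Fin 2 → ℝ) × (Fin 2 → ℝ) × ℝ => ∑ j, (q.1 j ^ 2 + q.2.1 j ^ 2))
      (by fun_prop) (heisR_sq p ▸ pow_ne_zero 2 hr.ne'), smul_apply, fderiv_sum_sq_apply,
    smul_eq_mul]
  field_simp

lemma fderiv_bubbleDefFn_apply (hr : 0 < heisR p) (hrL : heisR p ^ 2 < L ^ 2)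
    (v : (Fin 2 → ℝ) × (Fin 2 → ℝ) × ℝ) :
    fderiv ℝ (bubbleDefFn L) p v
      = v.2.2 + heisR p / (2 * √(L ^ 2 - heisR p ^ 2))
          * ∑ j, (p.1 j * v.1 j + p.2.1 j * v.2.1 j) := by
  have hφ := (hasDerivAt_bubbleProfile hrL).comp_hasFDerivAt p
    (differentiableAt_heisR hr).hasFDerivAt
  rw [HasFDerivAt.fderiv (f := bubbleDefFn L) (hasFDerivAt_snd.snd.sub hφ)]
  simp only [sub_apply, smul_apply, ContinuousLinearMap.comp_apply,
    ContinuousLinearMap.coe_snd', smul_eq_mul, fderiv_heisR_apply hr]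
  field_simp
  ring

lemma fderiv_bubbleDefFn_heisXdir (hr : 0 < heisR p) (hrL : heisR p ^ 2 < L ^ 2) (j : Fin 2) :
    fderiv ℝ (bubbleDefFn L) p (heisXdir j p)
      = -p.2.1 j / 2 + heisR p / (2 * √(L ^ 2 - heisR p ^ 2)) * p.1 j := by
  simp [fderiv_bubbleDefFn_apply hr hrL, heisXdir, Pi.single_apply]

lemma fderiv_bubbleDefFn_heisYdir (hr : 0 < heisR p) (hrL : heisR p ^ 2 < L ^ 2) (j : Fin 2) :
    fderiv ℝ (bubbleDefFn L) p (heisYdir j p)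
      = p.1 j / 2 + heisR p / (2 * √(L ^ 2 - heisR p ^ 2)) * p.2.1 j := by
  simp [fderiv_bubbleDefFn_apply hr hrL, heisYdir, Pi.single_apply]

end Bubble

theorem bubble_horizontal_gradient_norm_general
    (L : ℝ) (p : (Fin 2 → ℝ) × (Fin 2 → ℝ) × ℝ)
    (hr0 : 0 < heisR p) (hrL : heisR p < L) :
    Real.sqrt (∑ j : Fin 2,
        ((fderiv ℝ (bubbleDefFn L) p (heisXdir j p)) ^ 2
          + (fderiv ℝ (bubbleDefFn L) p (heisYdir j p)) ^ 2))
      = L * heisR p / (2 * Real.sqrt (L ^ 2 - (heisR p) ^ 2)) := by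
  have hrL2 : heisR p ^ 2 < L ^ 2 := pow_lt_pow_left₀ hrL hr0.le two_ne_zero
  have hs : √(L ^ 2 - heisR p ^ 2) ^ 2 = L ^ 2 - heisR p ^ 2 := sq_sqrt (by linarith)
  have hs0 : L ^ 2 - heisR p ^ 2 ≠ 0 := by linarith
  have hL : 0 < L := hr0.trans hrL
  simp only [fderiv_bubbleDefFn_heisXdir hr0 hrL2, fderiv_bubbleDefFn_heisYdir hr0 hrL2,
    sum_sq_half_rot_add_mul, ← heisR_sq]
  rw [← sqrt_sq (by positivity : 0 ≤ L * heisR p / (2 * √(L ^ 2 - heisR p ^ 2)))]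
  congr 1
  rw [div_pow, div_pow, mul_pow, mul_pow, hs]
  field_simp
  ring

/-- For the bubble set in ℍ², the horizontal gradient norm of the defining
function is W = L r / (2√(L²−r²)). -/
theorem bubble_horizontal_gradient_norm
    (L : ℝ) (hL : 0 < L) (p : (Fin 2 → ℝ) × (Fin 2 → ℝ) × ℝ)
    (hr0 : 0 < heisR p) (hrL : heisR p < L) :
    Real.sqrt (∑ j : Fin 2,
        ((fderiv ℝ (bubbleDefFn L) p (heisXdir j p)) ^ 2
          + (fderiv ℝ (bubbleDefFn L) p (heisYdir j p)) ^ 2))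
      = L * heisR p / (2 * Real.sqrt (L ^ 2 - (heisR p) ^ 2)) :=
  bubble_horizontal_gradient_norm_general L p hr0 hrL
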